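/- Let p_g(y|x) = σ(g(x))^y (1−σ(g(x)))^{1−y} with σ(t) = 1/(1+e^{−t}), for binary y ∈ {0,1}. If there exists δ > 0 such that δ ≤ σ(g(x)) ≤ 1−δ and δ ≤ σ(f(x)) ≤ 1−δ for all x, then there is a constant c > 0 depending only on δ such that E[log(p_f(Y|X)/p_g(Y|X))] ≥ c·E[(g(X)−f(X))^2], where (X,Y) is distributed with Y|X ~ Bernoulli(σ(f(X))). -/

import Mathlib

/-!
Writing `softplus t = log (1 + eᵗ)`, one has `log p_g(y|x) = y g(x) - softplus (g x)` for
`y ∈ {0, 1}`, so the log-likelihood ratio is the Bregman divergence of `softplus` between `f(X)`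
and `g(X)` plus `(Y - σ(f X)) (f X - g X)`; the latter has mean zero because `σ(f X) = E[Y | X]`.
Since `softplus'' = σ (1 - σ) ≥ δ²` on the interval where `σ ∈ [δ, 1 - δ]`, the function
`softplus t - δ² t² / 2` is convex there, and its tangent-line inequality bounds the Bregman
divergence below by `δ² / 2 · (g - f)²`.
-/

open MeasureTheory

noncomputable def sigmoid (t : ℝ) : ℝ := 1 / (1 + Real.exp (-t))

/-- The Bernoulli conditional density `p_g(y|x) = σ(g(x))^y (1−σ(g(x)))^{1−y}`. -/
noncomputable def bernDensity {𝒳 : Type*} (g : 𝒳 → ℝ) (x : 𝒳) (y : ℝ) : ℝ :=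
  Real.rpow (sigmoid (g x)) y * Real.rpow (1 - sigmoid (g x)) (1 - y)

lemma sigmoid_eq_real_sigmoid : sigmoid = Real.sigmoid := by
  funext t
  rw [sigmoid, Real.sigmoid_def, one_div]

noncomputable def softplus (t : ℝ) : ℝ := Real.log (1 + Real.exp t)

lemma hasDerivAt_softplus (t : ℝ) : HasDerivAt softplus (Real.sigmoid t) t := by
  refine (((Real.hasDerivAt_exp t).const_add 1).log (by positivity)).congr_deriv ?_
  rw [Real.sigmoid_def, Real.exp_neg]
  field_simp
  ring

lemma softplus_neg (t : ℝ) : softplus (-t) = softplus t - t := by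
  have h : 1 + Real.exp (-t) = Real.exp (-t) * (1 + Real.exp t) := by
    rw [mul_add, mul_one, ← Real.exp_add, neg_add_cancel, Real.exp_zero, add_comm]
  rw [softplus, softplus, h, Real.log_mul (by positivity) (by positivity), Real.log_exp]
  ring

lemma log_one_sub_sigmoid (t : ℝ) : Real.log (1 - Real.sigmoid t) = -softplus t := by
  rw [← Real.sigmoid_neg, Real.sigmoid_def, neg_neg, Real.log_inv, softplus]

lemma log_sigmoid (t : ℝ) : Real.log (Real.sigmoid t) = t - softplus t := by
  have h := log_one_sub_sigmoid (-t)
  rw [Real.sigmoid_neg, sub_sub_cancel, softplus_neg] at h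
  linarith

lemma lipschitzWith_softplus : LipschitzWith 1 softplus :=
  lipschitzWith_of_nnnorm_deriv_le (fun t => (hasDerivAt_softplus t).differentiableAt) fun t => by
    rw [(hasDerivAt_softplus t).deriv, ← NNReal.coe_le_coe, coe_nnnorm, Real.norm_eq_abs,
      abs_of_pos (Real.sigmoid_pos t)]
    exact Real.sigmoid_le_one t

@[fun_prop]
lemma continuous_softplus : Continuous softplus := lipschitzWith_softplus.continuous

lemma ConvexOn.add_mul_sub_le_of_hasDerivAt {S : Set ℝ} {φ : ℝ → ℝ} {x y φ' : ℝ}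
    (hφ : ConvexOn ℝ S φ) (hx : x ∈ S) (hy : y ∈ S) (hφ' : HasDerivAt φ φ' x) :
    φ x + φ' * (y - x) ≤ φ y := by
  rcases lt_trichotomy x y with hxy | rfl | hyx
  · have h := hφ.le_slope_of_hasDerivAt hx hy hxy hφ'
    rw [slope_def_field, le_div_iff₀ (sub_pos.2 hxy)] at h
    linarith
  · simp
  · have h := hφ.slope_le_of_hasDerivAt hy hx hyx hφ'
    rw [slope_def_field, div_le_iff₀ (sub_pos.2 hyx)] at h
    linarith

lemma convexOn_softplus_sub_sq {δ : ℝ} (hδ : 0 ≤ δ) :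
    ConvexOn ℝ (Real.sigmoid ⁻¹' Set.Icc δ (1 - δ)) fun t => softplus t - δ ^ 2 / 2 * t ^ 2 := by
  have hD : Convex ℝ (Real.sigmoid ⁻¹' Set.Icc δ (1 - δ)) :=
    (Set.ordConnected_Icc.preimage_mono Real.sigmoid_monotone).convex
  have hderiv (t : ℝ) : HasDerivAt (fun t => softplus t - δ ^ 2 / 2 * t ^ 2)
      (Real.sigmoid t - δ ^ 2 * t) t := by
    refine ((hasDerivAt_softplus t).sub
      ((hasDerivAt_pow 2 t).const_mul (δ ^ 2 / 2))).congr_deriv ?_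
    norm_num
    ring
  have hderiv2 (t : ℝ) : HasDerivAt (fun t => Real.sigmoid t - δ ^ 2 * t)
      (Real.sigmoid t * (1 - Real.sigmoid t) - δ ^ 2) t := by
    refine ((Real.hasDerivAt_sigmoid t).sub ((hasDerivAt_id t).const_mul (δ ^ 2))).congr_deriv ?_
    rw [mul_one]
  refine convexOn_of_hasDerivWithinAt2_nonneg hD
    (fun t _ => (hderiv t).continuousAt.continuousWithinAt)
    (fun t _ => (hderiv t).hasDerivWithinAt) (fun t _ => (hderiv2 t).hasDerivWithinAt) ?_
  intro t ht
  obtain ⟨hlo, hhi⟩ := interior_subset ht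
  nlinarith

/-- `KL(Bernoulli (σ a) ‖ Bernoulli (σ b))`, in its Bregman-divergence form. -/
noncomputable def logisticKL (a b : ℝ) : ℝ := softplus b - softplus a - Real.sigmoid a * (b - a)

lemma mul_sq_le_logisticKL {δ a b : ℝ} (hδ : 0 ≤ δ) (ha : Real.sigmoid a ∈ Set.Icc δ (1 - δ))
    (hb : Real.sigmoid b ∈ Set.Icc δ (1 - δ)) :
    δ ^ 2 / 2 * (b - a) ^ 2 ≤ logisticKL a b := by
  have h := (convexOn_softplus_sub_sq hδ).add_mul_sub_le_of_hasDerivAt ha hb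
    ((hasDerivAt_softplus a).sub ((hasDerivAt_pow 2 a).const_mul (δ ^ 2 / 2)))
  simp only [logisticKL] at h ⊢
  push_cast at h
  nlinarith

lemma abs_logisticKL_le (a b : ℝ) : |logisticKL a b| ≤ 2 * |b - a| := by
  have hsp := lipschitzWith_softplus.dist_le_mul b a
  simp only [NNReal.coe_one, one_mul, Real.dist_eq] at hsp
  have hσ : |Real.sigmoid a| ≤ 1 :=
    abs_le.2 ⟨by linarith [Real.sigmoid_pos a], Real.sigmoid_le_one a⟩
  calc |logisticKL a b| ≤ |softplus b - softplus a| + |Real.sigmoid a| * |b - a| := by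
        rw [logisticKL, ← abs_mul]; exact abs_sub _ _
    _ ≤ 2 * |b - a| := by nlinarith [abs_nonneg (b - a)]

lemma continuous_logisticKL : Continuous (Function.uncurry logisticKL) := by
  unfold logisticKL
  fun_prop

lemma MeasureTheory.Integrable.logisticKL {Ω : Type*} {m : MeasurableSpace Ω} {μ : Measure Ω}
    {u v : Ω → ℝ} (hu : Integrable u μ) (hv : Integrable v μ) :
    Integrable (fun ω => logisticKL (u ω) (v ω)) μ :=
  ((hv.sub hu).abs.const_mul 2).mono' (continuous_logisticKL.comp_aestronglyMeasurable₂ hu.1 hv.1)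
    (.of_forall fun _ => abs_logisticKL_le _ _)

lemma bernDensity_pos {𝒳 : Type*} (g : 𝒳 → ℝ) (x : 𝒳) (y : ℝ) : 0 < bernDensity g x y := by
  rw [bernDensity, sigmoid_eq_real_sigmoid]
  exact mul_pos (Real.rpow_pos_of_pos (Real.sigmoid_pos _) _)
    (Real.rpow_pos_of_pos (sub_pos.2 (Real.sigmoid_lt_one _)) _)

lemma log_bernDensity {𝒳 : Type*} (g : 𝒳 → ℝ) (x : 𝒳) {y : ℝ} (hy : y = 0 ∨ y = 1) :
    Real.log (bernDensity g x y) = y * g x - softplus (g x) := by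
  rcases hy with rfl | rfl <;>
    simp [bernDensity, sigmoid_eq_real_sigmoid, log_sigmoid, log_one_sub_sigmoid]

lemma log_bernDensity_div {𝒳 : Type*} (f g : 𝒳 → ℝ) (x : 𝒳) {y : ℝ} (hy : y = 0 ∨ y = 1) :
    Real.log (bernDensity f x y / bernDensity g x y)
      = logisticKL (f x) (g x) + (y - Real.sigmoid (f x)) * (f x - g x) := by
  rw [Real.log_div (bernDensity_pos f x y).ne' (bernDensity_pos g x y).ne',
    log_bernDensity f x hy, log_bernDensity g x hy, logisticKL]
  ring

theorem integral_sub_condExp_mul_eq_zero {Ω : Type*} {m m₀ : MeasurableSpace Ω} {μ : Measure Ω}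
    (hm : m ≤ m₀) [SigmaFinite (μ.trim hm)] {h Y : Ω → ℝ} (hh : StronglyMeasurable[m] h)
    (hhY : Integrable (h * Y) μ) (hY : Integrable Y μ) :
    ∫ ω, (Y ω - μ[Y | m] ω) * h ω ∂μ = 0 := by
  have hpull := condExp_mul_of_stronglyMeasurable_left hh hhY hY
  have hint : Integrable (h * μ[Y | m]) μ := integrable_condExp.congr hpull
  calc ∫ ω, (Y ω - μ[Y | m] ω) * h ω ∂μ = ∫ ω, (h * Y) ω ∂μ - ∫ ω, (h * μ[Y | m]) ω ∂μ := by
        rw [← integral_sub hhY hint]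
        congr with ω
        simp only [Pi.mul_apply]
        ring
    _ = 0 := by rw [← integral_condExp hm, integral_congr_ae hpull, sub_self]

/-- KL lower bound for logistic regression: if `σ(g)`, `σ(f)` are uniformly in
`[δ, 1−δ]` then there is `c > 0` depending only on `δ` with
`E[log(p_f(Y|X)/p_g(Y|X))] ≥ c · E[(g(X)−f(X))²]`, where `Y|X ~ Bernoulli(σ(f(X)))`. -/
theorem kl_lower_bound_logistic {Ω 𝒳 : Type*} [MeasurableSpace Ω] [MeasurableSpace 𝒳]
    (δ : ℝ) (hδ : 0 < δ) :
    ∃ c > (0 : ℝ), ∀ (μ : Measure Ω), IsProbabilityMeasure μ →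
      ∀ (X : Ω → 𝒳) (Y : Ω → ℝ) (f g : 𝒳 → ℝ),
      Measurable X → Measurable Y → Measurable f → Measurable g →
      (∀ ω, Y ω = 0 ∨ Y ω = 1) →
      (∀ x, δ ≤ sigmoid (g x) ∧ sigmoid (g x) ≤ 1 - δ) →
      (∀ x, δ ≤ sigmoid (f x) ∧ sigmoid (f x) ≤ 1 - δ) →
      ((fun ω => sigmoid (f (X ω))) =ᵐ[μ] μ[Y | MeasurableSpace.comap X inferInstance]) →
      MemLp (fun ω => f (X ω)) 2 μ → MemLp (fun ω => g (X ω)) 2 μ →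
      c * ∫ ω, (g (X ω) - f (X ω)) ^ 2 ∂μ
        ≤ ∫ ω, Real.log (bernDensity f (X ω) (Y ω) / bernDensity g (X ω) (Y ω)) ∂μ := by
  refine ⟨δ ^ 2 / 2, by positivity, fun μ _ X Y f g hX hY hf hg hY01 hgδ hfδ hcond hfL2 hgL2 => ?_⟩
  rw [sigmoid_eq_real_sigmoid] at hgδ hfδ hcond
  set h : Ω → ℝ := fun ω => f (X ω) - g (X ω)
  have hfX := hfL2.integrable one_le_two
  have hgX := hgL2.integrable one_le_two
  have hh : Integrable h μ := hfX.sub hgX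
  have hY_mem (ω) : 0 ≤ Y ω ∧ Y ω ≤ 1 := by rcases hY01 ω with hω | hω <;> simp [hω]
  have hY_le (ω) : ‖Y ω‖ ≤ 1 := abs_le.2 ⟨by linarith [hY_mem ω], (hY_mem ω).2⟩
  have hKL := hfX.logisticKL hgX
  have hnoise : Integrable (fun ω => (Y ω - Real.sigmoid (f (X ω))) * h ω) μ :=
    hh.bdd_mul (by fun_prop : Measurable _).aestronglyMeasurable (.of_forall fun ω =>
      abs_sub_le_of_nonneg_of_le (hY_mem ω).1 (hY_mem ω).2 (Real.sigmoid_nonneg _)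
        (Real.sigmoid_le_one _))
  have hnoise_zero : ∫ ω, (Y ω - Real.sigmoid (f (X ω))) * h ω ∂μ = 0 := by
    have hhm : StronglyMeasurable[MeasurableSpace.comap X inferInstance] h :=
      ((hf.sub hg).comp (Measurable.of_comap_le le_rfl)).stronglyMeasurable
    rw [← integral_sub_condExp_mul_eq_zero hX.comap_le hhm
      (hh.mul_bdd hY.aestronglyMeasurable (.of_forall hY_le))
      ((integrable_const 1).mono' hY.aestronglyMeasurable (.of_forall hY_le))]
    exact integral_congr_ae (hcond.mono fun ω hω => by simp only [← hω])
  calc δ ^ 2 / 2 * ∫ ω, (g (X ω) - f (X ω)) ^ 2 ∂μ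
      ≤ ∫ ω, logisticKL (f (X ω)) (g (X ω)) ∂μ := by
        rw [← integral_const_mul]
        exact integral_mono ((hgL2.sub hfL2).integrable_sq.const_mul _) hKL fun ω =>
          mul_sq_le_logisticKL hδ.le (hfδ (X ω)) (hgδ (X ω))
    _ = ∫ ω, Real.log (bernDensity f (X ω) (Y ω) / bernDensity g (X ω) (Y ω)) ∂μ := by
        simp_rw [log_bernDensity_div f g _ (hY01 _)]
        rw [integral_add hKL hnoise, hnoise_zero, add_zero]
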